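/- Let n, m ≥ 2 and let ξ_n(x) = x³ + (2n-1)x² - (n+2)x + 1. Then the element (1-nx)² does not lie in the ideal I = ⟨x^m - 1, ξ_n(x)⟩ generated by x^m - 1 and ξ_n(x) in ℤ[x]. -/
import Mathlib

open Polynomial

private def Amat (c : ℤ) : Matrix (Fin 3) (Fin 3) ℤ :=
  !![0, 0, -1; 1, 0, c+2; 0, 1, 1-2*c]

private def Bmat (a : ℝ) : Matrix (Fin 3) (Fin 3) ℝ :=
  !![0, 0, -1; 1, 0, a+2; 0, 1, 1-2*a]

private lemma key_xiA (c : ℤ) :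
    Amat c ^ 3 + (2*c-1) • Amat c ^ 2 - (c+2) • Amat c + 1 = 0 := by
  rw [pow_succ, pow_two]
  ext i j
  fin_cases i <;> fin_cases j <;> show _ = (0:ℤ) <;>
    simp only [Matrix.add_apply, Matrix.sub_apply, Matrix.smul_apply, Matrix.mul_apply,
      Matrix.one_apply, Fin.sum_univ_three, Amat] <;>
    norm_num [Matrix.cons_val_zero, Matrix.cons_val_one, Matrix.head_cons,
      Matrix.cons_val_two, Matrix.tail_cons, Matrix.head_fin_const, Fin.ext_iff] <;>
    ring

private lemma xiA (c : ℤ) :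
    (Polynomial.aeval (Amat c)) (X ^ 3 + C (2 * c - 1) * X ^ 2 - C (c + 2) * X + 1) = 0 := by
  have h : (X ^ 3 + C (2 * c - 1) * X ^ 2 - C (c + 2) * X + 1 : ℤ[X])
      = X ^ 3 + (2*c-1) • X ^ 2 - (c+2) • X + 1 := by
    simp [Polynomial.smul_eq_C_mul]
  rw [h, map_add, map_sub, map_add, map_pow, aeval_X, map_smul, map_pow, aeval_X,
    map_smul, aeval_X, map_one]
  exact key_xiA c

private lemma det_one_sub (c : ℤ) :
    (1 - (algebraMap ℤ (Matrix (Fin 3) (Fin 3) ℤ)) c * Amat c).det = 1 - c := by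
  rw [← Algebra.smul_def, Matrix.det_fin_three]
  simp only [Matrix.sub_apply, Matrix.smul_apply, Matrix.one_apply, Amat]
  norm_num [Matrix.cons_val_zero, Matrix.cons_val_one, Matrix.head_cons,
    Matrix.cons_val_two, Matrix.tail_cons, Matrix.head_fin_const, Fin.ext_iff]
  ring

private lemma det_sq_sub (c : ℤ) :
    (Amat c ^ 2 - 1).det = (c - 1) * (3 * c + 1) := by
  rw [pow_two, Matrix.det_fin_three]
  simp only [Matrix.sub_apply, Matrix.mul_apply, Matrix.one_apply, Fin.sum_univ_three, Amat]
  norm_num [Matrix.cons_val_zero, Matrix.cons_val_one, Matrix.head_cons,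
    Matrix.cons_val_two, Matrix.tail_cons, Matrix.head_fin_const, Fin.ext_iff]
  ring

private lemma det_cube_sub (c : ℤ) :
    (Amat c ^ 3 - 1).det = -((c - 1) * (7 * c ^ 2 + c + 13)) := by
  rw [pow_succ, pow_two, Matrix.det_fin_three]
  simp only [Matrix.sub_apply, Matrix.mul_apply, Matrix.one_apply, Fin.sum_univ_three, Amat]
  norm_num [Matrix.cons_val_zero, Matrix.cons_val_one, Matrix.head_cons,
    Matrix.cons_val_two, Matrix.tail_cons, Matrix.head_fin_const, Fin.ext_iff]
  ring

private lemma map_Amat (c : ℤ) :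
    (Int.castRingHom ℝ).mapMatrix (Amat c) = Bmat (c : ℝ) := by
  ext i j
  rw [RingHom.mapMatrix_apply]
  fin_cases i <;> fin_cases j <;>
    simp [Amat, Bmat, Matrix.map_apply]

private lemma vandermonde_mul (a : ℝ) (v : Fin 3 → ℝ)
    (hv : ∀ i, (v i)^3 + (2*a-1)*(v i)^2 - (a+2)*(v i) + 1 = 0) :
    Matrix.vandermonde v * Bmat a = Matrix.diagonal v * Matrix.vandermonde v := by
  ext i j
  rw [Matrix.diagonal_mul, Matrix.mul_apply]
  fin_cases j <;>
    simp only [Fin.sum_univ_three, Matrix.vandermonde_apply, Bmat] <;>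
    norm_num [Matrix.cons_val_zero, Matrix.cons_val_one, Matrix.head_cons,
      Matrix.cons_val_two, Matrix.tail_cons, Matrix.head_fin_const]
  · ring
  · linear_combination -hv i

private lemma det_Bmat_pow_sub (a : ℝ) (v : Fin 3 → ℝ)
    (hv : ∀ i, (v i)^3 + (2*a-1)*(v i)^2 - (a+2)*(v i) + 1 = 0)
    (h01 : v 0 < v 1) (h12 : v 1 < v 2) (m : ℕ) :
    (Bmat a ^ m - 1).det = (v 0 ^ m - 1) * ((v 1 ^ m - 1) * (v 2 ^ m - 1)) := by
  have hWk : ∀ k : ℕ, Matrix.vandermonde v * Bmat a ^ k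
      = Matrix.diagonal v ^ k * Matrix.vandermonde v := by
    intro k
    induction k with
    | zero => simp
    | succ k ih =>
        rw [pow_succ, pow_succ, ← Matrix.mul_assoc, ih, Matrix.mul_assoc,
          vandermonde_mul a v hv, ← Matrix.mul_assoc]
  have hdiag : Matrix.diagonal (fun i => v i ^ m - 1)
      = Matrix.diagonal v ^ m - 1 := by
    rw [Matrix.diagonal_pow, ← Matrix.diagonal_one, Matrix.diagonal_sub]
    rfl
  have h5 : Matrix.vandermonde v * (Bmat a ^ m - 1)
      = Matrix.diagonal (fun i => v i ^ m - 1) * Matrix.vandermonde v := by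
    rw [Matrix.mul_sub, hWk m, Matrix.mul_one, hdiag, Matrix.sub_mul, Matrix.one_mul]
  have h6 := congrArg Matrix.det h5
  rw [Matrix.det_mul, Matrix.det_mul, Matrix.det_diagonal] at h6
  have hW : (Matrix.vandermonde v).det ≠ 0 := by
    rw [Matrix.det_vandermonde_ne_zero_iff]
    have hmono : StrictMono v := by
      intro i j hij
      fin_cases i <;> fin_cases j <;> simp_all <;> linarith
    exact hmono.injective
  have h7 : (Bmat a ^ m - 1).det = ∏ i : Fin 3, (v i ^ m - 1) := by
    apply mul_left_cancel₀ hW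
    rw [h6, mul_comm]
  rw [h7, Fin.prod_univ_three, mul_assoc]


private lemma exists_roots (a : ℝ) (ha : 2 ≤ a) :
    ∃ r1 r2 r3 : ℝ,
      (r1^3 + (2*a-1)*r1^2 - (a+2)*r1 + 1 = 0) ∧
      (r2^3 + (2*a-1)*r2^2 - (a+2)*r2 + 1 = 0) ∧
      (r3^3 + (2*a-1)*r3^2 - (a+2)*r3 + 1 = 0) ∧
      r1 ≤ -a ∧ 0 ≤ r2 ∧ r1 < r2 ∧ r2 < r3 ∧ r2 ≤ 1/2 ∧ 0 ≤ r3 ∧ r3 ≤ 3/4 := by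
  have ha0 : (0:ℝ) < a := by linarith
  set f : ℝ → ℝ := fun x => x^3 + (2*a-1)*x^2 - (a+2)*x + 1 with hfdef
  have hcont : Continuous f := by unfold f; continuity
  have hfa : f (1/a) = (1-a)/a^3 := by unfold f; field_simp; ring
  have hfa0 : f (1/a) < 0 := by
    rw [hfa]
    apply div_neg_of_neg_of_pos
    · linarith
    · positivity
  have hinv2 : 1/a ≤ 1/2 := by rw [div_le_div_iff₀ ha0 (by norm_num)]; linarith
  have hinvpos : 0 < 1/a := by positivity
  obtain ⟨r1, hr1mem, hr1⟩ := intermediate_value_Icc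
    (show -(2*a+1) ≤ -a by linarith) hcont.continuousOn
    (Set.mem_Icc.mpr ⟨by show f _ ≤ 0; unfold f; norm_num; nlinarith,
      by show (0:ℝ) ≤ f _; unfold f; norm_num; nlinarith⟩)
  obtain ⟨r2, hr2mem, hr2⟩ := intermediate_value_Icc'
    (show (0:ℝ) ≤ 1/a by positivity) hcont.continuousOn
    (Set.mem_Icc.mpr ⟨le_of_lt hfa0, by show (0:ℝ) ≤ f 0; unfold f; norm_num⟩)
  obtain ⟨r3, hr3mem, hr3⟩ := intermediate_value_Icc
    (show 1/a ≤ 3/4 by linarith) hcont.continuousOn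
    (Set.mem_Icc.mpr ⟨le_of_lt hfa0, by show (0:ℝ) ≤ f _; unfold f; norm_num; nlinarith⟩)
  have hr2lt : r2 < 1/a := lt_of_le_of_ne hr2mem.2
    (fun h => absurd (by rw [← h]; exact hr2) hfa0.ne)
  have hr3gt : 1/a < r3 := lt_of_le_of_ne hr3mem.1
    (fun h => absurd (by rw [h]; exact hr3) hfa0.ne)
  exact ⟨r1, r2, r3, hr1, hr2, hr3, hr1mem.2, hr2mem.1,
    by linarith [hr2mem.1, hr1mem.2], lt_trans hr2lt hr3gt,
    by linarith, by linarith, hr3mem.2⟩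

set_option maxHeartbeats 1000000 in
theorem not_mem_ideal (n m : ℕ) (hn : 2 ≤ n) (hm : 2 ≤ m) :
    ((1 : ℤ[X]) - C (n : ℤ) * X) ^ 2 ∉
      Ideal.span {(X : ℤ[X]) ^ m - 1,
        X ^ 3 + C (2 * (n : ℤ) - 1) * X ^ 2 - C ((n : ℤ) + 2) * X + 1} := by
  intro hmem
  obtain ⟨f, g, hfg⟩ := Ideal.mem_span_pair.mp hmem
  set c : ℤ := (n : ℤ) with hcdef
  have hc : 2 ≤ c := by rw [hcdef]; exact_mod_cast hn
  -- apply aeval at the companion matrix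
  have h3 : (Polynomial.aeval (Amat c)) f * (Amat c ^ m - 1)
      = (1 - algebraMap ℤ (Matrix (Fin 3) (Fin 3) ℤ) c * Amat c) ^ 2 := by
    have h2 := congrArg (Polynomial.aeval (Amat c)) hfg
    rw [map_add, map_mul, map_mul, xiA c, mul_zero, add_zero, map_sub, map_pow, aeval_X,
      map_one, map_pow, map_sub, map_one, map_mul, aeval_C, aeval_X] at h2
    exact h2
  -- determinants
  have hdet := congrArg Matrix.det h3
  rw [Matrix.det_mul, Matrix.det_pow, det_one_sub] at hdet
  have hdvd : (Amat c ^ m - 1).det ∣ (c - 1) ^ 2 := by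
    exact ⟨((Polynomial.aeval (Amat c)) f).det, by linear_combination -hdet⟩
  have hc1 : (0:ℤ) < c - 1 := by linarith
  have hpos : (0:ℤ) < (c - 1) ^ 2 := by positivity
  have hle : |(Amat c ^ m - 1).det| ≤ (c - 1) ^ 2 :=
    Int.le_of_dvd hpos ((abs_dvd _ _).mpr hdvd)
  rcases lt_or_ge m 4 with h4 | h4
  · interval_cases m
    · rw [det_sq_sub, abs_of_nonneg (by nlinarith)] at hle
      nlinarith
    · rw [det_cube_sub, abs_of_nonpos (by nlinarith)] at hle
      nlinarith
  · -- m ≥ 4 : real-analytic bound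
    have hm0 : m ≠ 0 := by omega
    set a : ℝ := (c : ℝ) with hadef
    have ha : 2 ≤ a := by rw [hadef]; exact_mod_cast hc
    have ha0 : (0:ℝ) ≤ a := by linarith
    obtain ⟨r1, r2, r3, hq1, hq2, hq3, hb1, hb2, hb12, hb23, hb2half, hb30, hb34⟩ :=
      exists_roots a ha
    set v : Fin 3 → ℝ := ![r1, r2, r3] with hvdef
    have hv : ∀ i, (v i)^3 + (2*a-1)*(v i)^2 - (a+2)*(v i) + 1 = 0 := by
      intro i; fin_cases i <;> simpa [hvdef] using (by assumption)
    have h01 : v 0 < v 1 := by simpa [hvdef] using hb12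
    have h12 : v 1 < v 2 := by simpa [hvdef] using hb23
    have hdetB := det_Bmat_pow_sub a v hv h01 h12 m
    have hv0 : v 0 = r1 := rfl
    have hv1 : v 1 = r2 := rfl
    have hv2 : v 2 = r3 := rfl
    rw [hv0, hv1, hv2] at hdetB
    -- cast the integer determinant
    have hcast : (((Amat c ^ m - 1).det : ℤ) : ℝ) = (Bmat a ^ m - 1).det := by
      rw [show (((Amat c ^ m - 1).det : ℤ) : ℝ)
          = (Int.castRingHom ℝ) ((Amat c ^ m - 1).det) from rfl,
        RingHom.map_det, map_sub, map_pow, map_one, map_Amat, hadef]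
    have hleR : |(Bmat a ^ m - 1).det| ≤ (a - 1) ^ 2 := by
      rw [← hcast, ← Int.cast_abs, hadef]
      exact_mod_cast hle
    -- lower bounds on the three factors
    have har1 : a ≤ |r1| := le_trans (by linarith) (neg_le_abs r1)
    have hf1 : a^4 - 1 ≤ |r1^m - 1| := by
      have h14 : a^4 ≤ |r1|^m :=
        le_trans (pow_le_pow_right₀ (by linarith) h4) (pow_le_pow_left₀ ha0 har1 m)
      have := abs_sub_abs_le_abs_sub (r1^m) 1
      rw [abs_one, abs_pow] at this
      linarith
    have hr2m : r2^m ≤ r2 := pow_le_of_le_one hb2 (by linarith) hm0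
    have hf2 : 1/2 ≤ |r2^m - 1| := by
      rw [abs_of_nonpos (by linarith)]
      linarith
    have hr3m : r3^m ≤ r3 := pow_le_of_le_one hb30 (by linarith) hm0
    have hf3 : 1/4 ≤ |r3^m - 1| := by
      rw [abs_of_nonpos (by linarith)]
      linarith
    have ha4 : (0:ℝ) ≤ a^4 - 1 := by nlinarith
    have hprod : (a^4 - 1) * (1/2 * (1/4)) ≤ |(Bmat a ^ m - 1).det| := by
      rw [hdetB, abs_mul, abs_mul]
      have e2 : (1:ℝ)/2 * (1/4) ≤ |r2^m - 1| * |r3^m - 1| :=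
        mul_le_mul hf2 hf3 (by norm_num) (abs_nonneg _)
      exact mul_le_mul hf1 e2 (by norm_num) (abs_nonneg _)
    have hkey : 8*(a-1)^2 < a^4 - 1 := by nlinarith [sq_nonneg (a^2 - 4), ha]
    linarith [hleR, hprod, hkey]
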